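/- arXiv:2108.13628 — 2 statements merged into one kernel-verified Lean document; each statement's English description precedes it below -/
import Mathlib

section
/- Let X, K, Y, potential outcomes Y(k) satisfy consistency Y = Y(K), conditional exchangeability Y(k) ⟂ K | X, and positivity μ(k, x) = P(K = k | X = x) > 0, with X, 𝒦 finite. Let ν̂_k : 𝒳 → ℝ be arbitrary functions. Then for any policy π : 𝒳 → 𝒦, the doubly robust value E[ ν̂_{π(X)}(X) + (Y − ν̂_K(X)) · 1{K = π(X)} / μ(K, X) ] equals E[ Y(π(X)) ], i.e., the DR estimator with the true propensity score is unbiased regardless of the outcome model ν̂. -/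
/-!
Split the expectation along the fibres `{X = x}` and fix `k = π x`. The correction term only sees
units with `K = k`, where consistency turns `Y` into `Y(k)`; exchangeability says that the level
sets of `Y(k)` carry, on `{K = k, X = x}`, exactly the fraction `μ(k, x) = P(K = k | X = x)` of
their mass on `{X = x}`. Dividing by `μ(k, x)` (nonzero by positivity) therefore turns the
correction term into `E[(Y(k) - ν̂_k(x)) ; X = x]`, and the two `ν̂` terms cancel. Null fibres
contribute nothing because `p ≥ 0`.
-/


open Classical in
/-- Probability of an event under a probability mass function on a finite space. -/
noncomputable def Prb {Ω : Type*} [Fintype Ω] (p : Ω → ℝ) (A : Ω → Prop) : ℝ :=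
  ∑ ω, if A ω then p ω else 0

/-- Expectation under a probability mass function on a finite space. -/
noncomputable def ExV {Ω : Type*} [Fintype Ω] (p : Ω → ℝ) (f : Ω → ℝ) : ℝ :=
  ∑ ω, p ω * f ω

open Classical in
/-- Conditional expectation of `f` given the event `A`. -/
noncomputable def CExp {Ω : Type*} [Fintype Ω] (p : Ω → ℝ) (f : Ω → ℝ) (A : Ω → Prop) : ℝ :=
  (∑ ω, if A ω then p ω * f ω else 0) / Prb p A


open Finset

section Weighted

variable {Ω : Type*} [Fintype Ω] (p : Ω → ℝ)

theorem Prb_eq_sum_filter (A : Ω → Prop) [DecidablePred A] : Prb p A = ∑ ω with A ω, p ω := by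
  rw [Prb, sum_filter]
  congr!

variable {p}

theorem Prb_nonneg (hp : ∀ ω, 0 ≤ p ω) (A : Ω → Prop) : 0 ≤ Prb p A := by
  classical
  rw [Prb_eq_sum_filter]
  exact sum_nonneg fun ω _ => hp ω

theorem sum_filter_mul_eq_zero_of_Prb_eq_zero (hp : ∀ ω, 0 ≤ p ω) {A : Ω → Prop}
    [DecidablePred A] (hA : Prb p A = 0) (f : Ω → ℝ) : ∑ ω with A ω, p ω * f ω = 0 := by
  rw [Prb_eq_sum_filter, sum_eq_zero_iff_of_nonneg fun ω _ => hp ω] at hA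
  exact sum_eq_zero fun ω hω => by rw [hA ω hω, zero_mul]

variable (p)

theorem sum_mul_Prb_level_sets (Z : Ω → ℝ) (E : Ω → Prop) [DecidablePred E] :
    ∑ t ∈ univ.image Z, t * Prb p (fun ω => Z ω = t ∧ E ω) = ∑ ω with E ω, p ω * Z ω := by
  rw [← sum_fiberwise_of_maps_to (g := Z) fun ω _ => mem_image_of_mem Z (mem_univ ω)]
  refine sum_congr rfl fun t _ => ?_
  rw [Prb_eq_sum_filter, mul_sum, filter_filter]
  refine sum_congr (by ext; simp [and_comm]) fun ω hω => ?_
  rw [(mem_filter.1 hω).2.2, mul_comm]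

variable {p}

theorem sum_filter_mul_eq_mul_of_Prb_level_sets (hp : ∀ ω, 0 ≤ p ω) (Z : Ω → ℝ)
    {E F : Ω → Prop} [DecidablePred E] [DecidablePred F] {m : ℝ}
    (hZ : ∀ t, Prb p (fun ω => Z ω = t ∧ E ω) * Prb p F = Prb p (fun ω => Z ω = t ∧ F ω) * Prb p E)
    (hm : m * Prb p F = Prb p E) :
    ∑ ω with E ω, p ω * Z ω = m * ∑ ω with F ω, p ω * Z ω := by
  by_cases hF : Prb p F = 0
  · have hE : Prb p E = 0 := by rw [← hm, hF, mul_zero]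
    rw [sum_filter_mul_eq_zero_of_Prb_eq_zero hp hE, sum_filter_mul_eq_zero_of_Prb_eq_zero hp hF,
      mul_zero]
  · have key : (∑ ω with E ω, p ω * Z ω) * Prb p F = (∑ ω with F ω, p ω * Z ω) * Prb p E := by
      simp only [← sum_mul_Prb_level_sets, sum_mul]
      exact sum_congr rfl fun t _ => by rw [mul_assoc, mul_assoc, hZ t]
    apply mul_right_cancel₀ hF
    rw [key, ← hm]
    ring

theorem sum_fiberwise_eval {κ : Type*} [Fintype κ] [DecidableEq κ] (X : Ω → κ) (F : κ → Ω → ℝ) :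
    ∑ x, ∑ ω with X ω = x, F x ω = ∑ ω, F (X ω) ω := by
  rw [← sum_fiberwise univ X fun ω => F (X ω) ω]
  exact sum_congr rfl fun x _ => sum_congr rfl fun ω hω => by rw [(mem_filter.1 hω).2]

end Weighted

open Classical in
theorem sum_fiber_doublyRobust_eq {Ω 𝒳 𝒦 : Type*} [Fintype Ω] {p : Ω → ℝ} (hp : ∀ ω, 0 ≤ p ω)
    {X : Ω → 𝒳} {K : Ω → 𝒦} {Ypot : 𝒦 → Ω → ℝ} {Y : Ω → ℝ} (hcons : ∀ ω, Y ω = Ypot (K ω) ω)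
    {μ : 𝒦 → 𝒳 → ℝ} (νhat : 𝒦 → 𝒳 → ℝ) {k : 𝒦} {x : 𝒳}
    (hexch : ∀ t : ℝ,
      Prb p (fun ω => Ypot k ω = t ∧ K ω = k ∧ X ω = x) * Prb p (fun ω => X ω = x)
        = Prb p (fun ω => Ypot k ω = t ∧ X ω = x) * Prb p (fun ω => K ω = k ∧ X ω = x))
    (hpos : 0 < Prb p (fun ω => X ω = x) → 0 < Prb p (fun ω => K ω = k ∧ X ω = x))
    (hμ : μ k x * Prb p (fun ω => X ω = x) = Prb p (fun ω => K ω = k ∧ X ω = x)) :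
    ∑ ω with X ω = x, p ω * (νhat k x
        + (Y ω - νhat (K ω) x) * (if K ω = k then (1:ℝ) else 0) / μ (K ω) x)
      = ∑ ω with X ω = x, p ω * Ypot k ω := by
  by_cases hA : Prb p (fun ω => X ω = x) = 0
  · rw [sum_filter_mul_eq_zero_of_Prb_eq_zero hp hA, sum_filter_mul_eq_zero_of_Prb_eq_zero hp hA]
  have hμ_ne : μ k x ≠ 0 := by
    rintro h0
    rw [h0, zero_mul] at hμ
    exact (hpos ((Prb_nonneg hp _).lt_of_ne' hA)).ne hμ
  have htreated := sum_filter_mul_eq_mul_of_Prb_level_sets hp (Ypot k) hexch hμ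
  calc ∑ ω with X ω = x, p ω * (νhat k x
        + (Y ω - νhat (K ω) x) * (if K ω = k then (1:ℝ) else 0) / μ (K ω) x)
      = ∑ ω with X ω = x, (p ω * νhat k x
          + (if K ω = k then p ω * Ypot k ω - νhat k x * p ω else 0) / μ k x) := by
        refine sum_congr rfl fun ω _ => ?_
        by_cases hk : K ω = k
        · simp only [hk, hcons, if_true]
          ring
        · simp only [hk, if_false]
          ring
    _ = νhat k x * Prb p (fun ω => X ω = x)
          + (∑ ω with K ω = k ∧ X ω = x, p ω * Ypot k ω
            - νhat k x * Prb p (fun ω => K ω = k ∧ X ω = x)) / μ k x := by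
        have hKX : univ.filter (fun ω => X ω = x ∧ K ω = k)
            = univ.filter (fun ω => K ω = k ∧ X ω = x) := filter_congr fun ω _ => and_comm
        rw [sum_add_distrib, ← sum_div, ← sum_filter, filter_filter, hKX, sum_sub_distrib,
          Prb_eq_sum_filter, Prb_eq_sum_filter, mul_sum, mul_sum]
        simp only [mul_comm (νhat k x)]
    _ = ∑ ω with X ω = x, p ω * Ypot k ω := by
        rw [htreated, ← hμ]
        field_simp
        ring

open Classical in
theorem doubly_robust_true_propensity_general {Ω 𝒳 𝒦 : Type*} [Fintype Ω] [Fintype 𝒳] [Fintype 𝒦]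
    (p : Ω → ℝ) (hp : ∀ ω, 0 ≤ p ω)
    (X : Ω → 𝒳) (K : Ω → 𝒦) (Ypot : 𝒦 → Ω → ℝ) (Y : Ω → ℝ)
    (hcons : ∀ ω, Y ω = Ypot (K ω) ω)
    (hexch : ∀ (k k' : 𝒦) (x : 𝒳) (t : ℝ),
      Prb p (fun ω => Ypot k ω = t ∧ K ω = k' ∧ X ω = x) * Prb p (fun ω => X ω = x)
        = Prb p (fun ω => Ypot k ω = t ∧ X ω = x) * Prb p (fun ω => K ω = k' ∧ X ω = x))
    (hpos : ∀ (k : 𝒦) (x : 𝒳), 0 < Prb p (fun ω => X ω = x) →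
      0 < Prb p (fun ω => K ω = k ∧ X ω = x))
    (μ : 𝒦 → 𝒳 → ℝ)
    (hμ : ∀ (k : 𝒦) (x : 𝒳),
      μ k x * Prb p (fun ω => X ω = x) = Prb p (fun ω => K ω = k ∧ X ω = x))
    (νhat : 𝒦 → 𝒳 → ℝ) (π : 𝒳 → 𝒦) :
    ExV p (fun ω => νhat (π (X ω)) (X ω)
        + (Y ω - νhat (K ω) (X ω)) * (if K ω = π (X ω) then (1:ℝ) else 0) / μ (K ω) (X ω))
      = ExV p (fun ω => Ypot (π (X ω)) ω) := by
  unfold ExV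
  rw [← sum_fiberwise_eval X fun x ω => p ω * (νhat (π x) x
      + (Y ω - νhat (K ω) x) * (if K ω = π x then (1:ℝ) else 0) / μ (K ω) x),
    ← sum_fiberwise_eval X fun x ω => p ω * Ypot (π x) ω]
  exact sum_congr rfl fun x _ =>
    sum_fiber_doublyRobust_eq hp hcons νhat (hexch _ _ x) (hpos _ x) (hμ _ x)

open Classical in
/-- Doubly robust identity with the true propensity score: for any outcome model `ν̂`,
`E[ν̂_{π(X)}(X) + (Y − ν̂_K(X)) 𝟙{K = π(X)} / μ(K, X)] = E[Y(π(X))]`. -/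
theorem doubly_robust_true_propensity {Ω 𝒳 𝒦 : Type*} [Fintype Ω] [Fintype 𝒳] [Fintype 𝒦]
    (p : Ω → ℝ) (hp : ∀ ω, 0 ≤ p ω) (hp1 : ∑ ω, p ω = 1)
    (X : Ω → 𝒳) (K : Ω → 𝒦) (Ypot : 𝒦 → Ω → ℝ) (Y : Ω → ℝ)
    (hcons : ∀ ω, Y ω = Ypot (K ω) ω)
    (hexch : ∀ (k k' : 𝒦) (x : 𝒳) (t : ℝ),
      Prb p (fun ω => Ypot k ω = t ∧ K ω = k' ∧ X ω = x) * Prb p (fun ω => X ω = x)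
        = Prb p (fun ω => Ypot k ω = t ∧ X ω = x) * Prb p (fun ω => K ω = k' ∧ X ω = x))
    (hpos : ∀ (k : 𝒦) (x : 𝒳), 0 < Prb p (fun ω => X ω = x) →
      0 < Prb p (fun ω => K ω = k ∧ X ω = x))
    (μ : 𝒦 → 𝒳 → ℝ)
    (hμ : ∀ (k : 𝒦) (x : 𝒳),
      μ k x * Prb p (fun ω => X ω = x) = Prb p (fun ω => K ω = k ∧ X ω = x))
    (νhat : 𝒦 → 𝒳 → ℝ) (π : 𝒳 → 𝒦) :
    ExV p (fun ω => νhat (π (X ω)) (X ω)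
        + (Y ω - νhat (K ω) (X ω)) * (if K ω = π (X ω) then (1:ℝ) else 0) / μ (K ω) (X ω))
      = ExV p (fun ω => Ypot (π (X ω)) ω) :=
  doubly_robust_true_propensity_general p hp X K Ypot Y hcons hexch hpos μ hμ νhat π
end

section
/- There exists a joint distribution of binary random variables X¹, X², treatment K ∈ {0,1}, and potential outcomes Y(0), Y(1) with conditional exchangeability and positivity such that: (i) the policy π₁ branching on X¹ (π₁(x)=x¹) satisfies E[Y(π₁(X))] > E[Y(π₂(X))] for every policy π₂ depending only on X²; but (ii) there exists a policy π₂ depending only on X² with Σ_{x²} P(X² = x²) · E[Y | K = π₂(x²), X² = x²] > Σ_{x¹} P(X¹ = x¹) · E[Y | K = π₁(x¹), X¹ = x¹]. Specifically, take X¹, X² independent Bernoulli(1/2), P(K=0|X¹=0)=0.9, P(K=0|X¹=1)=0.1, E[Y(0)|X¹=0]=1, E[Y(1)|X¹=0]=0.8, E[Y(0)|X¹=1]=0, E[Y(1)|X¹=1]=0.2. -/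
/-- Table of mean potential outcomes of Example 1: `exMean k x¹ = E[Y(k) | X¹ = x¹]`. -/
noncomputable def exMean : Fin 2 → Fin 2 → ℝ := fun k x1 =>
  if k = 0 then (if x1 = 0 then 1 else 0) else (if x1 = 0 then 0.8 else 0.2)

/-!
The treatment is confounded by `X¹`: units with `X¹ = 0` are mostly untreated and have the better
untreated outcome, units with `X¹ = 1` are mostly treated. Taking the potential outcomes to be
functions of `X¹` makes exchangeability given `(X¹, X²)` automatic. Averaged over `X¹`,
`E[Y(k)] = 1/2` for both treatments, so every policy on the independent covariate `X²` has value
`1/2`, while following `X¹` earns `3/5`. The K-PT objective averages observed outcomes over the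
units whose treatment agrees with the policy: in a leaf of `X²` the untreated units mostly have
`X¹ = 0`, so "never treat" scores `9/10`, while in the leaves of `X¹` the objective is the true
value `3/5`.
-/

section Prb

variable {Ω : Type*} [Fintype Ω] {p : Ω → ℝ}

theorem prb_and_of_imp {A B : Ω → Prop} (h : ∀ ω, B ω → A ω) :
    Prb p (fun ω => A ω ∧ B ω) = Prb p B := by
  unfold Prb
  refine Finset.sum_congr rfl fun ω _ => ?_
  by_cases hB : B ω <;> simp [hB, h ω]

theorem prb_and_of_imp_not {A B : Ω → Prop} (h : ∀ ω, B ω → ¬ A ω) :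
    Prb p (fun ω => A ω ∧ B ω) = 0 := by
  unfold Prb
  refine Finset.sum_eq_zero fun ω _ => ?_
  by_cases hB : B ω <;> simp [hB, h ω]

theorem prb_pos (hp : ∀ ω, 0 < p ω) {A : Ω → Prop} (hA : ∃ ω, A ω) : 0 < Prb p A := by
  obtain ⟨ω₀, hω₀⟩ := hA
  refine Finset.sum_pos' (fun ω _ => ?_) ⟨ω₀, Finset.mem_univ ω₀, ?_⟩
  · split_ifs
    exacts [(hp ω).le, le_rfl]
  · simpa [hω₀] using hp ω₀

variable {α κ : Type*} {X : Ω → α} {Y : Ω → ℝ} {f : α → ℝ}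

theorem sum_ite_mul_of_eq_comp [DecidableEq α] (hY : ∀ ω, Y ω = f (X ω)) (x : α) :
    (∑ ω, if X ω = x then p ω * Y ω else 0) = f x * Prb p (fun ω => X ω = x) := by
  unfold Prb
  rw [Finset.mul_sum]
  refine Finset.sum_congr rfl fun ω _ => ?_
  split_ifs with hx
  · rw [hY, hx, mul_comm]
  · rw [mul_zero]

theorem prb_mul_prb_of_eq_comp (hY : ∀ ω, Y ω = f (X ω)) (K : Ω → κ) (k : κ) (x : α) (t : ℝ) :
    Prb p (fun ω => Y ω = t ∧ K ω = k ∧ X ω = x) * Prb p (fun ω => X ω = x)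
      = Prb p (fun ω => Y ω = t ∧ X ω = x) * Prb p (fun ω => K ω = k ∧ X ω = x) := by
  by_cases ht : f x = t
  · have hYt : ∀ ω, X ω = x → Y ω = t := fun ω hx => by rw [hY, hx, ht]
    rw [prb_and_of_imp fun ω h => hYt ω h.2, prb_and_of_imp hYt, mul_comm]
  · have hYt : ∀ ω, X ω = x → Y ω ≠ t := fun ω hx => by rwa [hY, hx]
    rw [prb_and_of_imp_not fun ω h => hYt ω h.2, prb_and_of_imp_not hYt, zero_mul, zero_mul]

end Prb

noncomputable def policyValue {Ω α κ : Type*} [Fintype Ω] (p : Ω → ℝ) (Y : κ → Ω → ℝ)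
    (X : Ω → α) (π : α → κ) : ℝ :=
  ExV p (fun ω => Y (π (X ω)) ω)

noncomputable def kptObjective {Ω α κ : Type*} [Fintype Ω] [Fintype α] (p : Ω → ℝ)
    (Y : κ → Ω → ℝ) (K : Ω → κ) (X : Ω → α) (π : α → κ) : ℝ :=
  ∑ x, Prb p (fun ω => X ω = x) * CExp p (fun ω => Y (K ω) ω) (fun ω => K ω = π x ∧ X ω = x)

theorem exMean_zero_add_exMean_one (k : Fin 2) : exMean k 0 + exMean k 1 = 1 := by
  fin_cases k <;> norm_num [exMean]

namespace Example1

-- `ω = 4 X¹ + 2 X² + K`; given the covariates, `K = X¹` with probability `9/10`.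
def X1 : Fin 8 → Fin 2 := ![0, 0, 0, 0, 1, 1, 1, 1]
def X2 : Fin 8 → Fin 2 := ![0, 0, 1, 1, 0, 0, 1, 1]
def K : Fin 8 → Fin 2 := ![0, 1, 0, 1, 0, 1, 0, 1]

noncomputable def p (ω : Fin 8) : ℝ := if K ω = X1 ω then 9 / 40 else 1 / 40

noncomputable def Y (k : Fin 2) (ω : Fin 8) : ℝ := exMean k (X1 ω)

theorem p_pos (ω : Fin 8) : 0 < p ω := by
  unfold p
  split_ifs <;> norm_num

theorem sum_p : ∑ ω, p ω = 1 := by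
  simp only [Fin.sum_univ_eight, p, K, X1, Matrix.cons_val]
  norm_num

theorem exists_K_eq_X_eq (k : Fin 2) (x : Fin 2 × Fin 2) : ∃ ω, K ω = k ∧ (X1 ω, X2 ω) = x := by
  revert k x
  decide

theorem prb_X1_X2 (a b : Fin 2) : Prb p (fun ω => X1 ω = a ∧ X2 ω = b) = 1 / 4 := by
  fin_cases a <;> fin_cases b <;>
    simp only [Prb, Fin.sum_univ_eight, p, K, X1, X2, Matrix.cons_val] <;> norm_num

theorem prb_K_zero_X1_zero :
    Prb p (fun ω => K ω = 0 ∧ X1 ω = 0) = 0.9 * Prb p (fun ω => X1 ω = 0) := by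
  simp only [Prb, Fin.sum_univ_eight, p, K, X1, Matrix.cons_val]
  norm_num

theorem prb_K_zero_X1_one :
    Prb p (fun ω => K ω = 0 ∧ X1 ω = 1) = 0.1 * Prb p (fun ω => X1 ω = 1) := by
  simp only [Prb, Fin.sum_univ_eight, p, K, X1, Matrix.cons_val]
  norm_num

theorem policyValue_X1_id : policyValue p Y X1 id = 3 / 5 := by
  simp only [policyValue, ExV, Fin.sum_univ_eight, p, Y, K, X1, id, Matrix.cons_val]
  norm_num [exMean]

theorem policyValue_X2 (g : Fin 2 → Fin 2) : policyValue p Y X2 g = 1 / 2 := by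
  simp only [policyValue, ExV, Fin.sum_univ_eight, p, Y, K, X1, X2, Matrix.cons_val,
    ↓reduceIte, Fin.isValue, one_ne_zero, zero_ne_one]
  linear_combination (1 / 4 : ℝ) *
    (exMean_zero_add_exMean_one (g 0) + exMean_zero_add_exMean_one (g 1))

theorem kptObjective_X1_id : kptObjective p Y K X1 id = 3 / 5 := by
  simp only [kptObjective, CExp, Prb, Fin.sum_univ_two, Fin.sum_univ_eight, p, Y, K, X1, id,
    Matrix.cons_val]
  norm_num [exMean]

theorem kptObjective_X2_zero : kptObjective p Y K X2 (fun _ => 0) = 9 / 10 := by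
  simp only [kptObjective, CExp, Prb, Fin.sum_univ_two, Fin.sum_univ_eight, p, Y, K, X1, X2,
    Matrix.cons_val]
  norm_num [exMean]

end Example1

open Classical in
/-- Example 1: there is a joint distribution (with conditional exchangeability and
positivity) for which the policy branching on `X¹` is strictly better than every policy
branching on `X²` in true value, yet some `X²`-branching policy has a strictly larger
K-PT objective (within-leaf average observed outcome). -/
theorem example1_exists :
    ∃ (n : ℕ) (p : Fin n → ℝ) (X1 X2 K : Fin n → Fin 2) (Ypot : Fin 2 → Fin n → ℝ),
      (∀ ω, 0 ≤ p ω) ∧ (∑ ω, p ω = 1) ∧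
      -- X¹, X² independent Bernoulli(1/2)
      (∀ a b : Fin 2, Prb p (fun ω => X1 ω = a ∧ X2 ω = b) = 1 / 4) ∧
      -- P(K = 0 | X¹ = 0) = 0.9 and P(K = 0 | X¹ = 1) = 0.1
      Prb p (fun ω => K ω = 0 ∧ X1 ω = 0) = 0.9 * Prb p (fun ω => X1 ω = 0) ∧
      Prb p (fun ω => K ω = 0 ∧ X1 ω = 1) = 0.1 * Prb p (fun ω => X1 ω = 1) ∧
      -- mean potential outcomes given X¹ follow the table of Example 1
      (∀ k x1 : Fin 2, (∑ ω, if X1 ω = x1 then p ω * Ypot k ω else 0)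
        = exMean k x1 * Prb p (fun ω => X1 ω = x1)) ∧
      -- conditional exchangeability given X = (X¹, X²)
      (∀ (k k' : Fin 2) (x : Fin 2 × Fin 2) (t : ℝ),
        Prb p (fun ω => Ypot k ω = t ∧ K ω = k' ∧ (X1 ω, X2 ω) = x)
            * Prb p (fun ω => (X1 ω, X2 ω) = x)
          = Prb p (fun ω => Ypot k ω = t ∧ (X1 ω, X2 ω) = x)
            * Prb p (fun ω => K ω = k' ∧ (X1 ω, X2 ω) = x)) ∧
      -- positivity
      (∀ (k : Fin 2) (x : Fin 2 × Fin 2), 0 < Prb p (fun ω => (X1 ω, X2 ω) = x) →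
        0 < Prb p (fun ω => K ω = k ∧ (X1 ω, X2 ω) = x)) ∧
      -- (i) branching on X¹ beats every policy depending only on X²
      (∀ g : Fin 2 → Fin 2,
        ExV p (fun ω => Ypot (g (X2 ω)) ω) < ExV p (fun ω => Ypot (X1 ω) ω)) ∧
      -- (ii) yet some X²-policy has a strictly larger within-leaf observed-outcome objective
      (∃ g : Fin 2 → Fin 2,
        (∑ x1 : Fin 2, Prb p (fun ω => X1 ω = x1)
            * CExp p (fun ω => Ypot (K ω) ω) (fun ω => K ω = x1 ∧ X1 ω = x1))
          < ∑ x2 : Fin 2, Prb p (fun ω => X2 ω = x2)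
            * CExp p (fun ω => Ypot (K ω) ω) (fun ω => K ω = g x2 ∧ X2 ω = x2)) := by
  open Example1 in
  refine ⟨8, p, X1, X2, K, Y, fun ω => (p_pos ω).le, sum_p, prb_X1_X2, prb_K_zero_X1_zero,
    prb_K_zero_X1_one, fun k => sum_ite_mul_of_eq_comp fun _ => rfl,
    fun k => prb_mul_prb_of_eq_comp (Y := Y k) (X := fun ω => (X1 ω, X2 ω))
      (f := fun x => exMean k x.1) (fun _ => rfl) K,
    fun k x _ => prb_pos p_pos (exists_K_eq_X_eq k x), fun g => ?_, ⟨fun _ => 0, ?_⟩⟩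
  · show policyValue p Y X2 g < policyValue p Y X1 id
    rw [policyValue_X2, policyValue_X1_id]
    norm_num
  · show kptObjective p Y K X1 id < kptObjective p Y K X2 (fun _ => 0)
    rw [kptObjective_X1_id, kptObjective_X2_zero]
    norm_num
end
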